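/- arXiv:1507.05816 — 3 statements merged into one kernel-verified Lean document; each statement's English description precedes it below -/
import Mathlib

section
/- There exists a subset B of 𝔹ℂ such that e₁B and e₂B are convex in the ℂ(i)-vector spaces e₁𝔹ℂ and e₂𝔹ℂ respectively, but B ≠ e₁B + e₂B (hence B is not 𝔹ℂ-convex). For example B = {e₁z₁ + e₂z₂ : |z₁| + |z₂| < 2} works: e₁·(3/2) ∈ e₁B, e₂·(3/2) ∈ e₂B, but 3/2 ∉ B. -/
/-!
The open ball `B = {‖z₁‖ + ‖z₂‖ < 2}` is convex over `ℝ`, so its idempotent projections `e₁B`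
and `e₂B` are convex. Taking the hyperbolic weight `λ = e₁` in `𝔹ℂ`-convexity gives
`e₁x + e₂y ∈ B` for all `x, y ∈ B`, which fails for `x = e₁`, `y = e₂`: both lie in `B`, but
`e₁x + e₂y = 1` has `‖z₁‖ + ‖z₂‖ = 2`.
-/

noncomputable section

abbrev BC : Type := ℂ × ℂ
abbrev Hyp : Type := ℝ × ℝ

def BC.e1 : BC := (1, 0)
def BC.e2 : BC := (0, 1)

def normK (z : BC) : Hyp := (‖z.1‖, ‖z.2‖)

def hypToBC (l : Hyp) : BC := ((l.1 : ℂ), (l.2 : ℂ))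

def embedC (c : ℂ) : BC := (c, c)

def ltH (a b : Hyp) : Prop := a.1 < b.1 ∧ a.2 < b.2

def absH (a : Hyp) : Hyp := (|a.1|, |a.2|)

def BCBalanced {X : Type*} [AddCommGroup X] [Module BC X] (B : Set X) : Prop :=
  ∀ l : BC, normK l ≤ 1 → ∀ x ∈ B, l • x ∈ B

def BCConvex {X : Type*} [AddCommGroup X] [Module BC X] (B : Set X) : Prop :=
  ∀ x ∈ B, ∀ y ∈ B, ∀ l : Hyp, 0 ≤ l → l ≤ 1 →
    hypToBC l • x + hypToBC (1 - l) • y ∈ B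

def BCAbsorbing {X : Type*} [AddCommGroup X] [Module BC X] (B : Set X) : Prop :=
  ∀ x : X, ∃ ε : Hyp, (0 < ε.1 ∧ 0 < ε.2) ∧
    ∀ l : Hyp, 0 ≤ l → l ≤ ε → hypToBC l • x ∈ B

def CxConvex {X : Type*} [AddCommGroup X] [Module BC X] (S : Set X) : Prop :=
  ∀ x ∈ S, ∀ y ∈ S, ∀ t : ℝ, 0 ≤ t → t ≤ 1 →
    embedC (t : ℂ) • x + embedC ((1 - t : ℝ) : ℂ) • y ∈ S

def idemSum {X : Type*} [AddCommGroup X] [Module BC X] (B : Set X) : Set X :=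
  Set.image2 (fun b b' => BC.e1 • b + BC.e2 • b') B B

def IsDSeminorm {X : Type*} [AddCommGroup X] [Module BC X] (p : X → Hyp) : Prop :=
  (∀ l : BC, ∀ x : X, p (l • x) = normK l * p x) ∧
  (∀ x y : X, p (x + y) ≤ p x + p y)

def gaugeD {X : Type*} [AddCommGroup X] [Module BC X] (B : Set X) (x : X) : Hyp :=
  (sInf (Prod.fst '' {α : Hyp | (0 < α.1 ∧ 0 < α.2) ∧ x ∈ (fun b => hypToBC α • b) '' B}),
   sInf (Prod.snd '' {α : Hyp | (0 < α.1 ∧ 0 < α.2) ∧ x ∈ (fun b => hypToBC α • b) '' B}))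

def l1Ball (r : ℝ) : Set BC := {z | ‖z.1‖ + ‖z.2‖ < r}

theorem convex_l1Ball (r : ℝ) : Convex ℝ (l1Ball r) := by
  have h : ConvexOn ℝ Set.univ (fun z : BC => ‖z.1‖ + ‖z.2‖) :=
    ((convexOn_norm convex_univ).comp_linearMap (LinearMap.fst ℝ ℂ ℂ)).add
      ((convexOn_norm convex_univ).comp_linearMap (LinearMap.snd ℝ ℂ ℂ))
  simpa [l1Ball] using h.convex_lt r

theorem embedC_ofReal_smul (t : ℝ) (z : BC) : embedC (t : ℂ) • z = t • z := by
  ext <;> simp [embedC, Complex.real_smul]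

theorem CxConvex.of_convex {S : Set BC} (hS : Convex ℝ S) : CxConvex S := by
  intro x hx y hy t ht0 ht1
  rw [embedC_ofReal_smul, embedC_ofReal_smul]
  exact hS hx hy ht0 (by linarith) (by ring)

theorem cxConvex_smul_image_of_convex {S : Set BC} (hS : Convex ℝ S) (c : BC) :
    CxConvex ((fun x => c • x) '' S) :=
  CxConvex.of_convex (hS.linear_image (LinearMap.mulLeft ℝ c))

theorem BCConvex.idemSum_subset {X : Type*} [AddCommGroup X] [Module BC X] {B : Set X}
    (hB : BCConvex B) : idemSum B ⊆ B := by
  rintro _ ⟨x, hx, y, hy, rfl⟩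
  have h := hB x hx y hy (1, 0) (by simp [Prod.le_def]) (by simp [Prod.le_def])
  have h1 : hypToBC (1, 0) = BC.e1 := by simp [hypToBC, BC.e1]
  have h2 : hypToBC (1 - (1, 0)) = BC.e2 := by simp [hypToBC, BC.e2, Prod.sub_def]
  simpa only [h1, h2] using h

theorem not_idemSum_l1Ball_subset {r : ℝ} (hr : 0 < r) : ¬ idemSum (l1Ball r) ⊆ l1Ball r := by
  intro h
  have hmem : ((r / 2 : ℂ), (0 : ℂ)) ∈ l1Ball r ∧ ((0 : ℂ), (r / 2 : ℂ)) ∈ l1Ball r := by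
    constructor <;> simp [l1Ball, abs_of_pos hr] <;> linarith
  have := h ⟨_, hmem.1, _, hmem.2, rfl⟩
  simp [l1Ball, BC.e1, BC.e2, abs_of_pos hr] at this

theorem exists_parts_convex_not_bcConvex :
    ∃ B : Set BC,
      CxConvex ((fun x => BC.e1 • x) '' B) ∧
      CxConvex ((fun x => BC.e2 • x) '' B) ∧
      B ≠ idemSum B ∧ ¬ BCConvex B := by
  have hB := not_idemSum_l1Ball_subset two_pos
  refine ⟨l1Ball 2, cxConvex_smul_image_of_convex (convex_l1Ball 2) _,
    cxConvex_smul_image_of_convex (convex_l1Ball 2) _, ?_, fun h => hB h.idemSum_subset⟩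
  exact fun h => hB h.symm.subset
end
end

section
/- In a topological 𝔹ℂ-module X, if B is a 𝔹ℂ-convex subset then the interior B° and the closure of B are also 𝔹ℂ-convex, and B° = e₁B° + e₂B°, cl(B) = e₁cl(B) + e₂cl(B). -/
noncomputable section

lemma BC.e1_add_e2 : BC.e1 + BC.e2 = 1 := by
  simp [BC.e1, BC.e2, Prod.ext_iff]

lemma hypToBC_add_hypToBC_one_sub (l : Hyp) : hypToBC l + hypToBC (1 - l) = 1 := by
  simp [hypToBC, Prod.ext_iff]

lemma hypToBC_one_zero : hypToBC (1, 0) = BC.e1 := by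
  simp [hypToBC, BC.e1]

lemma hypToBC_one_sub_one_zero : hypToBC (1 - (1, 0)) = BC.e2 := by
  simp [hypToBC, BC.e2]

section Module

variable {X : Type*} [AddCommGroup X] [Module BC X]

lemma hypToBC_smul_add_one_sub_smul_add (l : Hyp) (x y d : X) :
    hypToBC l • (x + d) + hypToBC (1 - l) • (y + d) =
      hypToBC l • x + hypToBC (1 - l) • y + d := by
  rw [smul_add, smul_add, add_add_add_comm, ← add_smul, hypToBC_add_hypToBC_one_sub, one_smul]

lemma subset_idemSum (S : Set X) : S ⊆ idemSum S := fun x hx =>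
  ⟨x, hx, x, hx, show BC.e1 • x + BC.e2 • x = x by rw [← add_smul, BC.e1_add_e2, one_smul]⟩

lemma BCConvex.idemSum_subset_s9 {S : Set X} (hS : BCConvex S) : idemSum S ⊆ S := by
  rintro _ ⟨b, hb, b', hb', rfl⟩
  have h := hS b hb b' hb' (1, 0) (by simp [Prod.le_def]) (by simp [Prod.le_def])
  rwa [hypToBC_one_zero, hypToBC_one_sub_one_zero] at h

lemma BCConvex.idemSum_eq {S : Set X} (hS : BCConvex S) : idemSum S = S :=
  hS.idemSum_subset_s9.antisymm (subset_idemSum S)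

variable [TopologicalSpace X]

/-- Near `z = l x + (1 - l) y`, every `w` is the same combination of the translates
`x + (w - z)` and `y + (w - z)`, which lie in `B` when `w` is close to `z`. -/
lemma BCConvex.interior [ContinuousAdd X] {B : Set X} (hB : BCConvex B) :
    BCConvex (interior B) := by
  intro x hx y hy l hl0 hl1
  set z := hypToBC l • x + hypToBC (1 - l) • y
  have translate (a : X) : Filter.Tendsto (fun w => a + (w - z)) (nhds z) (nhds a) :=
    ((continuous_add_const (a - z)).tendsto' z a (by abel)).congr fun w => by abel
  rw [mem_interior_iff_mem_nhds] at hx hy ⊢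
  filter_upwards [translate x hx, translate y hy] with w hwx hwy
  have hw := hB _ hwx _ hwy l hl0 hl1
  rwa [hypToBC_smul_add_one_sub_smul_add, add_sub_cancel] at hw

lemma BCConvex.closure [ContinuousAdd X] [ContinuousConstSMul BC X] {B : Set X}
    (hB : BCConvex B) : BCConvex (closure B) := fun _ hx _ hy l hl0 hl1 =>
  map_mem_closure₂ (f := fun a b => hypToBC l • a + hypToBC (1 - l) • b)
    ((continuous_fst.const_smul _).add (continuous_snd.const_smul _)) hx hy
    fun a ha b hb => hB a ha b hb l hl0 hl1

end Module

theorem bcConvex_interior_closure_general {X : Type*} [AddCommGroup X] [Module BC X]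
    [TopologicalSpace X] [ContinuousAdd X] [ContinuousSMul BC X]
    (B : Set X) (hB : BCConvex B) :
    BCConvex (interior B) ∧ BCConvex (closure B) ∧
    interior B = idemSum (interior B) ∧ closure B = idemSum (closure B) :=
  ⟨hB.interior, hB.closure, hB.interior.idemSum_eq.symm, hB.closure.idemSum_eq.symm⟩

theorem bcConvex_interior_closure {X : Type*} [AddCommGroup X] [Module BC X]
    [TopologicalSpace X] [T2Space X] [ContinuousAdd X] [ContinuousSMul BC X]
    (B : Set X) (hB : BCConvex B) :
    BCConvex (interior B) ∧ BCConvex (closure B) ∧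
    interior B = idemSum (interior B) ∧ closure B = idemSum (closure B) :=
  bcConvex_interior_closure_general B hB
end
end

section
/- Every 𝔹ℂ-convex neighbourhood of 0 in a topological 𝔹ℂ-module contains a 𝔹ℂ-convex, 𝔹ℂ-balanced neighbourhood of 0. -/
noncomputable section

/-!
The candidate is the balanced core `⋂_{|λ|_k ≤' 1} λ⁻¹U`, i.e. the points `x` with `λx ∈ U` for
every `λ` in the closed unit polydisc. It is balanced because the polydisc is closed under
multiplication, and convex because multiplication by `λ` is additive and commutes with the
hyperbolic scalars. It is a neighbourhood of `0` by the tube lemma: the polydisc is compact and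
`λ • 0 = 0 ∈ int U` for each of its points.
-/

open Filter Topology

theorem normK_le_one_iff (l : BC) : normK l ≤ 1 ↔ ‖l‖ ≤ 1 := by
  rw [Prod.norm_def, max_le_iff]
  exact Prod.mk_le_mk

theorem normK_mul_le_one {a b : BC} (ha : normK a ≤ 1) (hb : normK b ≤ 1) :
    normK (a * b) ≤ 1 := by
  rw [normK_le_one_iff] at *
  exact (norm_mul_le a b).trans (mul_le_one₀ ha (norm_nonneg b) hb)

theorem isCompact_setOf_normK_le_one : IsCompact {l : BC | normK l ≤ 1} := by
  have hball : {l : BC | normK l ≤ 1} = Metric.closedBall 0 1 := by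
    ext l
    rw [mem_closedBall_zero_iff, ← normK_le_one_iff]
    rfl
  exact hball ▸ isCompact_closedBall 0 1

theorem setOf_forall_smul_mem_mem_nhds_zero {R X : Type*} [TopologicalSpace R]
    [TopologicalSpace X] [Zero X] [SMulZeroClass R X] [ContinuousSMul R X]
    {K : Set R} (hK : IsCompact K) {U : Set X} (hU : U ∈ 𝓝 (0 : X)) :
    {x : X | ∀ l ∈ K, l • x ∈ U} ∈ 𝓝 (0 : X) := by
  refine hK.eventually_forall_of_forall_eventually fun l _ => ?_
  have hcont : Tendsto (fun z : X × R => z.2 • z.1) (𝓝 (0, l)) (𝓝 (l • (0 : X))) :=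
    (continuous_snd.smul continuous_fst).tendsto (0, l)
  rw [smul_zero] at hcont
  exact hcont hU

section BalancedCore

variable {X : Type*} [AddCommGroup X] [Module BC X]

def bcBalancedCore (U : Set X) : Set X := {x | ∀ l : BC, normK l ≤ 1 → l • x ∈ U}

theorem bcBalancedCore_subset (U : Set X) : bcBalancedCore U ⊆ U := fun x hx => by
  simpa only [one_smul] using hx 1 (by simp [normK_le_one_iff])

theorem bcBalanced_bcBalancedCore (U : Set X) : BCBalanced (bcBalancedCore U) :=
  fun l hl x hx m hm => by
    simpa only [smul_smul] using hx (m * l) (normK_mul_le_one hm hl)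

theorem BCConvex.bcBalancedCore {U : Set X} (hU : BCConvex U) :
    BCConvex (bcBalancedCore U) := fun x hx y hy l hl0 hl1 m hm => by
  rw [smul_add, smul_comm m (hypToBC l), smul_comm m (hypToBC (1 - l))]
  exact hU _ (hx m hm) _ (hy m hm) l hl0 hl1

theorem bcBalancedCore_mem_nhds_zero [TopologicalSpace X] [ContinuousSMul BC X] {U : Set X}
    (hU : U ∈ 𝓝 (0 : X)) : bcBalancedCore U ∈ 𝓝 (0 : X) :=
  setOf_forall_smul_mem_mem_nhds_zero isCompact_setOf_normK_le_one hU

end BalancedCore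

theorem convex_nhds_contains_convex_balanced_general {X : Type*} [AddCommGroup X] [Module BC X]
    [TopologicalSpace X] [ContinuousSMul BC X]
    (U : Set X) (hU : U ∈ nhds (0 : X)) (hc : BCConvex U) :
    ∃ V ∈ nhds (0 : X), BCConvex V ∧ BCBalanced V ∧ V ⊆ U :=
  ⟨bcBalancedCore U, bcBalancedCore_mem_nhds_zero hU, hc.bcBalancedCore,
    bcBalanced_bcBalancedCore U, bcBalancedCore_subset U⟩

theorem convex_nhds_contains_convex_balanced {X : Type*} [AddCommGroup X] [Module BC X]
    [TopologicalSpace X] [T2Space X] [ContinuousAdd X] [ContinuousSMul BC X]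
    (U : Set X) (hU : U ∈ nhds (0 : X)) (hc : BCConvex U) :
    ∃ V ∈ nhds (0 : X), BCConvex V ∧ BCBalanced V ∧ V ⊆ U :=
  convex_nhds_contains_convex_balanced_general U hU hc
end
end
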